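/- arXiv:1208.2752 — 2 statements merged into one kernel-verified Lean document; each statement's English description precedes it below -/
import Mathlib

section
/- Let P be a probabilistic transition system specification with a strict stratification S (i.e., a stratification in which also every proper closed instance of a positive premise lies in a strictly smaller stratum than the corresponding instance of the conclusion). Then →_{P,S} is the only supported model of P. -/
open scoped ENNReal Classical

namespace PTSSpec

/-! ### Signatures and terms -/

structure Sig : Type 1 where
  F : Type
  ar : F → ℕ

variable {s : Sig} {M V A : Type}

/-- Terms over a signature with variables from `α`. -/
inductive Tm (s : Sig) (α : Type) : Type
  | var : α → Tm s α
  | app : (f : s.F) → (Fin (s.ar f) → Tm s α) → Tm s α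

/-- Closed terms `T(Σ)`. -/
abbrev CTm (s : Sig) : Type := Tm s Empty

def Tm.bind {α β : Type} (σ : α → Tm s β) : Tm s α → Tm s β
  | .var x => σ x
  | .app f ts => .app f fun i => (ts i).bind σ

def Tm.vars {α : Type} : Tm s α → Set α
  | .var x => {x}
  | .app _ ts => ⋃ i, (ts i).vars

/-- Embedding of closed terms into terms with variables. -/
def CTm.emb {α : Type} : CTm s → Tm s α := Tm.bind fun e => e.elim

/-! ### Distribution terms -/

/-- Distribution terms: distribution variables, instantiable Dirac distributions, and
nested convex combinations of products of distribution terms pushed forward along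
functions `g : T(Σ)ⁿ → T(Σ)`. -/
inductive DTm (s : Sig) (M V : Type) : Type 1
  | dvar : M → DTm s M V
  | dirac : Tm s V → DTm s M V
  | comb : (ι : Type) → (p : ι → ℝ≥0∞) → (n : ι → ℕ) →
      (g : (i : ι) → (Fin (n i) → CTm s) → CTm s) →
      (θ : (i : ι) → Fin (n i) → DTm s M V) →
      (∀ i, p i ≠ 0 ∧ p i ≤ 1) → (∑' i, p i = 1) → DTm s M V

def DTm.subst (σV : V → Tm s V) (σM : M → DTm s M V) : DTm s M V → DTm s M V
  | .dvar μ => σM μ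
  | .dirac t => .dirac (t.bind σV)
  | .comb ι p n g θ h1 h2 => .comb ι p n g (fun i k => (θ i k).subst σV σM) h1 h2

/-- Evaluation of a distribution term under a closed substitution, as a mass function
on closed terms. -/
noncomputable def DTm.eval (ρV : V → CTm s) (ρM : M → PMF (CTm s)) :
    DTm s M V → CTm s → ℝ≥0∞
  | .dvar μ => fun u => ρM μ u
  | .dirac t => fun u => if u = t.bind ρV then 1 else 0
  | .comb ι p n g θ _ _ => fun u =>
      ∑' i : ι, p i * ∑' v : Fin (n i) → CTm s,
        (if g i v = u then ∏ k, (θ i k).eval ρV ρM (v k) else 0)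

def DTm.varsT : DTm s M V → Set V
  | .dvar _ => ∅
  | .dirac t => t.vars
  | .comb ι _ n _ θ _ _ => ⋃ i, ⋃ k, (θ i k).varsT

def DTm.varsM : DTm s M V → Set M
  | .dvar μ => {μ}
  | .dirac _ => ∅
  | .comb ι _ n _ θ _ _ => ⋃ i, ⋃ k, (θ i k).varsM

def DTm.IsClosed (θ : DTm s M V) : Prop := θ.varsT = ∅ ∧ θ.varsM = ∅

/-- The mass that a mass function assigns to a set of closed terms. -/
noncomputable def massOf (f : CTm s → ℝ≥0∞) (T : Set (CTm s)) : ℝ≥0∞ := ∑' t : T, f t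

/-! ### Literals, rules, substitutions -/

/-- Comparison operators for quantitative literals. -/
inductive CmpOp : Type
  | gt | ge | lt | le

def CmpOp.holds : CmpOp → ℝ≥0∞ → ℝ≥0∞ → Prop
  | .gt, a, b => a > b
  | .ge, a, b => a ≥ b
  | .lt, a, b => a < b
  | .le, a, b => a ≤ b

/-- Literals: positive `t →a θ`, negative `t ↛a`, quantitative `θ(W) ⋈ q`. -/
inductive Lit (s : Sig) (M V A : Type) : Type 1
  | pos : Tm s V → A → DTm s M V → Lit s M V A
  | neg : Tm s V → A → Lit s M V A
  | quant : DTm s M V → Set (Tm s V) → CmpOp → ℝ≥0∞ → Lit s M V A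

def Lit.IsPos : Lit s M V A → Prop
  | .pos _ _ _ => True
  | _ => False

def Lit.IsNeg : Lit s M V A → Prop
  | .neg _ _ => True
  | _ => False

def Lit.IsQuant : Lit s M V A → Prop
  | .quant _ _ _ _ => True
  | _ => False

/-- A transition rule. -/
structure Rule (s : Sig) (M V A : Type) : Type 1 where
  prem : Set (Lit s M V A)
  src : Tm s V
  lbl : A
  tgt : DTm s M V

def Rule.concLit (r : Rule s M V A) : Lit s M V A := .pos r.src r.lbl r.tgt

/-- An (open) substitution. -/
structure Subst (s : Sig) (M V : Type) : Type 1 where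
  tm : V → Tm s V
  dm : M → DTm s M V

/-- A closed substitution: term variables go to closed terms, distribution variables to
discrete probability distributions on closed terms. -/
structure CSubst (s : Sig) (M V : Type) : Type where
  tm : V → CTm s
  dm : M → PMF (CTm s)

def Lit.subst (σ : Subst s M V) : Lit s M V A → Lit s M V A
  | .pos t a θ => .pos (t.bind σ.tm) a (θ.subst σ.tm σ.dm)
  | .neg t a => .neg (t.bind σ.tm) a
  | .quant θ W c q => .quant (θ.subst σ.tm σ.dm) ((fun w => w.bind σ.tm) '' W) c q

def Rule.subst (σ : Subst s M V) (r : Rule s M V A) : Rule s M V A :=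
  ⟨Lit.subst σ '' r.prem, r.src.bind σ.tm, r.lbl, r.tgt.subst σ.tm σ.dm⟩

def Lit.varsT : Lit s M V A → Set V
  | .pos t _ θ => t.vars ∪ θ.varsT
  | .neg t _ => t.vars
  | .quant θ W _ _ => θ.varsT ∪ ⋃ w ∈ W, w.vars

def Lit.varsM : Lit s M V A → Set M
  | .pos _ _ θ => θ.varsM
  | .neg _ _ => ∅
  | .quant θ _ _ _ => θ.varsM

def Lit.IsClosed : Lit s M V A → Prop
  | .pos t _ θ => t.vars = ∅ ∧ θ.IsClosed
  | .neg t _ => t.vars = ∅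
  | .quant θ W _ _ => θ.IsClosed ∧ ∀ w ∈ W, w.vars = (∅ : Set V)

def Rule.varsT (r : Rule s M V A) : Set V :=
  r.src.vars ∪ r.tgt.varsT ∪ ⋃ l ∈ r.prem, l.varsT

def Rule.varsM (r : Rule s M V A) : Set M :=
  r.tgt.varsM ∪ ⋃ l ∈ r.prem, l.varsM

/-- Validity of a (closed) quantitative literal: since a closed literal does not depend on
the environment, we quantify universally over closed substitutions. -/
def Lit.QuantHolds : Lit s M V A → Prop
  | .quant θ W c q =>
      ∀ ρ : CSubst s M V,
        c.holds (massOf (θ.eval ρ.tm ρ.dm) ((fun w => w.bind ρ.tm) '' W)) q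
  | _ => False

/-! ### Probabilistic transition system specifications -/

/-- Rules of a PTSS: positive premises target distribution variables, quantitative
premises test sets of variables against `q ∈ [0,1]`. -/
def Rule.IsBasic (r : Rule s M V A) : Prop :=
  (∀ l ∈ r.prem, ∀ t a θ, l = Lit.pos t a θ → ∃ μ, θ = DTm.dvar μ) ∧
  (∀ l ∈ r.prem, ∀ θ W c q, l = Lit.quant θ W c q →
      (∀ w ∈ W, ∃ x, w = Tm.var x) ∧ q ≤ 1)

structure PTSS (s : Sig) (M V A : Type) : Type 1 where
  R : Set (Rule s M V A)
  basic : ∀ r ∈ R, r.IsBasic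

/-- Closed positive literals (probabilistic transitions). -/
abbrev PLit (s : Sig) (A : Type) : Type := CTm s × A × PMF (CTm s)

/-- Probabilistic transition relations. -/
abbrev TRel (s : Sig) (A : Type) : Type := Set (PLit s A)

/-- A closed substitution is proper for a set of premises if all elements of `W` of a
quantitative premise `θ(W) ⋈ q` have positive probability under the instance of `θ`. -/
def CSubst.ProperFor (ρ : CSubst s M V) (H : Set (Lit s M V A)) : Prop :=
  ∀ l ∈ H, ∀ θ W c q, l = Lit.quant θ W c q →
    ∀ w ∈ W, 0 < θ.eval ρ.tm ρ.dm (w.bind ρ.tm)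

/-- Satisfaction of the closed instance (under `ρ`) of a literal by a transition
relation. -/
def Lit.SatC (τ : TRel s A) (ρ : CSubst s M V) : Lit s M V A → Prop
  | .pos t a θ =>
      ∃ π : PMF (CTm s), ⇑π = θ.eval ρ.tm ρ.dm ∧ (t.bind ρ.tm, a, π) ∈ τ
  | .neg t a => ∀ π : PMF (CTm s), (t.bind ρ.tm, a, π) ∉ τ
  | .quant θ W c q =>
      c.holds (massOf (θ.eval ρ.tm ρ.dm) ((fun w => w.bind ρ.tm) '' W)) q

/-- The closed instance of the conclusion of `r` under `ρ` is the closed positive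
literal `ψ`. -/
def Rule.Matches (r : Rule s M V A) (ρ : CSubst s M V) (ψ : PLit s A) : Prop :=
  ψ.1 = r.src.bind ρ.tm ∧ ψ.2.1 = r.lbl ∧ ⇑ψ.2.2 = r.tgt.eval ρ.tm ρ.dm

/-- Supported model. -/
def IsSupportedModel (P : PTSS s M V A) (τ : TRel s A) : Prop :=
  ∀ ψ : PLit s A, ψ ∈ τ ↔
    ∃ r ∈ P.R, ∃ ρ : CSubst s M V,
      ρ.ProperFor r.prem ∧ r.Matches ρ ψ ∧ ∀ l ∈ r.prem, l.SatC τ ρ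

/-! ### Stratifications and the associated transition relation -/

/-- The stratification conditions for a single rule. -/
def StratCond (S : PLit s A → Ordinal.{0}) (r : Rule s M V A) : Prop :=
  ∀ ρ : CSubst s M V, ρ.ProperFor r.prem →
    ∀ π : PMF (CTm s), ⇑π = r.tgt.eval ρ.tm ρ.dm →
      (∀ l ∈ r.prem, ∀ t a θ, l = Lit.pos t a θ →
        ∀ π' : PMF (CTm s), ⇑π' = θ.eval ρ.tm ρ.dm →
          S (t.bind ρ.tm, a, π') ≤ S (r.src.bind ρ.tm, r.lbl, π)) ∧
      (∀ l ∈ r.prem, ∀ t b, l = Lit.neg t b →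
        ∀ π' : PMF (CTm s),
          S (t.bind ρ.tm, b, π') < S (r.src.bind ρ.tm, r.lbl, π))

/-- The strict condition on positive premises. -/
def StratCondStrictPos (S : PLit s A → Ordinal.{0}) (r : Rule s M V A) : Prop :=
  ∀ ρ : CSubst s M V, ρ.ProperFor r.prem →
    ∀ π : PMF (CTm s), ⇑π = r.tgt.eval ρ.tm ρ.dm →
      ∀ l ∈ r.prem, ∀ t a θ, l = Lit.pos t a θ →
        ∀ π' : PMF (CTm s), ⇑π' = θ.eval ρ.tm ρ.dm →
          S (t.bind ρ.tm, a, π') < S (r.src.bind ρ.tm, r.lbl, π)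

def IsStrat (P : PTSS s M V A) (S : PLit s A → Ordinal.{0}) : Prop :=
  ∀ r ∈ P.R, StratCond S r

def IsStrictStrat (P : PTSS s M V A) (S : PLit s A → Ordinal.{0}) : Prop :=
  IsStrat P S ∧ ∀ r ∈ P.R, StratCondStrictPos S r

/-- `D(P)`: the smallest regular cardinal bounding the cardinality of the set of
positive premises of every rule. -/
noncomputable def DP (P : PTSS s M V A) : Cardinal.{1} :=
  sInf {c : Cardinal.{1} | c.IsRegular ∧
    ∀ r ∈ P.R, Cardinal.mk {l : Lit s M V A // l ∈ r.prem ∧ l.IsPos} ≤ c}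

/-- The `j`-th iteration of stratum `β`, given the union `low` of all lower strata. -/
noncomputable def stageJ (P : PTSS s M V A) (S : PLit s A → Ordinal.{0})
    (low : TRel s A) (β : Ordinal.{0}) : Ordinal.{1} → TRel s A :=
  WellFounded.fix (C := fun _ => TRel s A) (wellFounded_lt (α := Ordinal.{1}))
    fun j rec =>
      { ψ | S ψ = β ∧ ∃ r ∈ P.R, ∃ ρ : CSubst s M V,
          ρ.ProperFor r.prem ∧ r.Matches ρ ψ ∧
          (∀ l ∈ r.prem, (l.IsPos ∨ l.IsQuant) →
            l.SatC (low ∪ ⋃ j' : {k : Ordinal.{1} // k < j}, rec j'.1 j'.2) ρ) ∧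
          (∀ l ∈ r.prem, l.IsNeg → l.SatC low ρ) }

/-- The stratum `→_{P_β}`. -/
noncomputable def stratum (P : PTSS s M V A) (S : PLit s A → Ordinal.{0}) :
    Ordinal.{0} → TRel s A :=
  WellFounded.fix (C := fun _ => TRel s A) (wellFounded_lt (α := Ordinal.{0}))
    fun β rec =>
      ⋃ j : {j : Ordinal.{1} // j ≤ (DP P).ord},
        stageJ P S (⋃ γ : {γ : Ordinal.{0} // γ < β}, rec γ.1 γ.2) β j.1

/-- The transition relation `→_{P,S}` associated with `P` based on `S`. -/
noncomputable def assocRel (P : PTSS s M V A) (S : PLit s A → Ordinal.{0}) : TRel s A :=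
  ⋃ β : Ordinal.{0}, stratum P S β

/-! ### Proof structures and provable rules -/

/-- A proof structure. -/
structure PStruct (s : Sig) (M V A : Type) : Type 1 where
  B : Set (Rule s M V A)
  root : Rule s M V A
  φ : Rule s M V A → Lit s M V A
  root_mem : root ∈ B
  vars_disj : ∀ b ∈ B, ∀ b' ∈ B, b ≠ b' →
    b.varsT ∩ b'.varsT = ∅ ∧ b.varsM ∩ b'.varsM = ∅
  φ_mem : ∀ b ∈ B, b ≠ root → (φ b).IsPos ∧ ∃ b' ∈ B, φ b ∈ b'.prem
  φ_inj : ∀ b ∈ B, ∀ b' ∈ B, b ≠ root → b' ≠ root → φ b = φ b' → b = b'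
  chains_finite :
    WellFounded (fun b₂ b₁ => b₁ ∈ B ∧ b₂ ∈ B ∧ b₂ ≠ root ∧ φ b₂ ∈ b₁.prem)

/-- `top(B,r,φ)`: premises of rules in `B` outside the image of `φ`. -/
def PStruct.top (D : PStruct s M V A) : Set (Lit s M V A) :=
  { l | (∃ b ∈ D.B, l ∈ b.prem) ∧ ∀ b ∈ D.B, b ≠ D.root → D.φ b ≠ l }

/-- A substitution matches a proof structure. -/
def PStruct.MatchedBy (D : PStruct s M V A) (σ : Subst s M V) : Prop :=
  ∀ b ∈ D.B, b ≠ D.root → (Rule.concLit b).subst σ = (D.φ b).subst σ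

/-- Bijective renamings of variables. -/
def Subst.IsRenaming (σ : Subst s M V) : Prop :=
  (∃ f : V ≃ V, σ.tm = fun x => Tm.var (f x)) ∧
  (∃ g : M ≃ M, σ.dm = fun μ => DTm.dvar (g μ))

/-- `r'` is an α-variant of `r`. -/
def AlphaEq (r r' : Rule s M V A) : Prop :=
  ∃ σ : Subst s M V, σ.IsRenaming ∧ r' = r.subst σ

/-- Provability of the rule `H/c` from a PTSS `P` via proof structures. -/
def Provable (P : PTSS s M V A) (H : Set (Lit s M V A)) (c : Lit s M V A) : Prop :=
  c ∈ H ∨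
    ∃ (D : PStruct s M V A) (σ : Subst s M V),
      (∀ b ∈ D.B, ∃ r₀ ∈ P.R, AlphaEq r₀ b) ∧
      D.MatchedBy σ ∧
      (∀ l ∈ D.top, ¬l.IsQuant → l.subst σ ∈ H) ∧
      (∀ l ∈ D.top, l.IsQuant →
        ((l.subst σ).IsClosed → (l.subst σ).QuantHolds) ∧
        (¬(l.subst σ).IsClosed → l.subst σ ∈ H)) ∧
      (Rule.concLit D.root).subst σ = c

/-- A PTSS is small if the collection of premises of each rule has cardinality at most
that of the set of variables. -/
def PTSS.Small (P : PTSS s M V A) : Prop :=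
  ∀ r ∈ P.R, Cardinal.mk ↥r.prem ≤ Cardinal.lift.{1} (Cardinal.mk V)

/-- The provable closure `R⊢` of a PTSS. -/
inductive InClosure (P : PTSS s M V A) (H : Set (Lit s M V A)) : Lit s M V A → Prop
  | base {c : Lit s M V A} (hc : c ∈ H) : InClosure P H c
  | step (r : Rule s M V A) (hr : r ∈ P.R) (σ : Subst s M V)
      (hpn : ∀ l ∈ r.prem, (l.IsPos ∨ l.IsNeg) → InClosure P H (l.subst σ))
      (hqOpen : ∀ l ∈ r.prem, l.IsQuant →
        ¬(l.subst σ).IsClosed → InClosure P H (l.subst σ))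
      (hqClosed : ∀ l ∈ r.prem, l.IsQuant →
        (l.subst σ).IsClosed → (l.subst σ).QuantHolds) :
      InClosure P H ((Rule.concLit r).subst σ)

/-! ### Well-supported proofs -/

/-- Closed literals. -/
inductive CLit (s : Sig) (A : Type) : Type
  | pos : CTm s → A → PMF (CTm s) → CLit s A
  | neg : CTm s → A → CLit s A

/-- Two closed literals deny each other. -/
def CLit.Denies : CLit s A → CLit s A → Prop
  | .pos t a _, .neg t' a' => t = t' ∧ a = a'
  | .neg t a, .pos t' a' _ => t = t' ∧ a = a'
  | _, _ => False

/-- A closed literal denies an (extended) literal. -/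
def CLit.DeniesLit : CLit s A → Lit s M V A → Prop
  | .pos t a _, Lit.neg t' a' => t' = CTm.emb t ∧ a' = a
  | .neg t a, Lit.pos t' a' _ => t' = CTm.emb t ∧ a' = a
  | _, _ => False

/-- An (extended) literal denies a closed literal. -/
def LitDeniesC : Lit s M V A → CLit s A → Prop
  | Lit.pos t' a' _, CLit.neg t a => t' = CTm.emb t ∧ a' = a
  | Lit.neg t' a', CLit.pos t a _ => t' = CTm.emb t ∧ a' = a
  | _, _ => False

/-- Well-supported provability `P ⊢_ws ψ`. -/
inductive WSProv (P : PTSS s M V A) : CLit s A → Prop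
  | pos (r : Rule s M V A) (hr : r ∈ P.R) (ρ : CSubst s M V)
      (hp : ρ.ProperFor r.prem)
      (π : PMF (CTm s)) (hπ : ⇑π = r.tgt.eval ρ.tm ρ.dm)
      (hq : ∀ l ∈ r.prem, ∀ θ W c q, l = Lit.quant θ W c q →
        c.holds (massOf (θ.eval ρ.tm ρ.dm) ((fun w => w.bind ρ.tm) '' W)) q)
      (hpos : ∀ l ∈ r.prem, ∀ t a μ, l = Lit.pos t a (DTm.dvar μ) →
        WSProv P (.pos (t.bind ρ.tm) a (ρ.dm μ)))
      (hneg : ∀ l ∈ r.prem, ∀ t b, l = Lit.neg t b →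
        WSProv P (.neg (t.bind ρ.tm) b)) :
      WSProv P (.pos (r.src.bind ρ.tm) r.lbl π)
  | neg (t : CTm s) (a : A) (K : Set (CLit s A))
      (hK : ∀ χ ∈ K, WSProv P χ)
      (hden : ∀ (N : Set (Lit s M V A)) (φ : Lit s M V A),
        Provable P N φ → φ.IsClosed → LitDeniesC φ (.neg t a) →
        ∃ χ ∈ K, ∃ l ∈ N, χ.DeniesLit l) :
      WSProv P (.neg t a)

def PTSS.Complete (P : PTSS s M V A) : Prop :=
  ∀ (t : CTm s) (a : A), (∃ π, WSProv P (.pos t a π)) ∨ WSProv P (.neg t a)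

def PTSS.Consistent (P : PTSS s M V A) : Prop :=
  ∀ χ χ' : CLit s A, WSProv P χ → WSProv P χ' → ¬χ.Denies χ'

/-- A transition relation satisfies a closed literal. -/
def CLit.SatBy (τ : TRel s A) : CLit s A → Prop
  | .pos t a π => (t, a, π) ∈ τ
  | .neg t a => ∀ π : PMF (CTm s), (t, a, π) ∉ τ

/-! ### Bisimulation -/

def RClosedSet (Rel : CTm s → CTm s → Prop) (Q : Set (CTm s)) : Prop :=
  ∀ t ∈ Q, ∀ t', Rel t t' → t' ∈ Q

/-- Lifting of a relation on closed terms to distributions. -/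
def liftRel (Rel : CTm s → CTm s → Prop) (π π' : PMF (CTm s)) : Prop :=
  ∀ Q : Set (CTm s), RClosedSet Rel Q → massOf (⇑π) Q = massOf (⇑π') Q

def IsBisimulation (τ : TRel s A) (Rel : CTm s → CTm s → Prop) : Prop :=
  Symmetric Rel ∧
  ∀ t t' a π, Rel t t' → (t, a, π) ∈ τ →
    ∃ π', (t', a, π') ∈ τ ∧ liftRel Rel π π'

/-- Bisimilarity: the smallest relation including all bisimulations. -/
def Bisim (τ : TRel s A) (t t' : CTm s) : Prop :=
  ∃ Rel, IsBisimulation τ Rel ∧ Rel t t'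

/-! ### Rule formats -/

/-- Renaming of the tuple-variable placeholders by a tuple `z` from the diagonal set. -/
def zren {L : Type} (z : L → V) : L ⊕ V → Tm s V
  | .inl l => .var (z l)
  | .inr v => .var v

/-- The shape and conditions on the premises of an `ntμfθ`/`ntμxθ` rule, parameterized
by the set `xs` of binding variables of the source of the conclusion. -/
def Rule.PremFormat (r : Rule s M V A) (xs : Set V) : Prop :=
  ∃ (Mi Ni L : Type) (Kl : L → Type)
    (tm : Mi → Tm s (L ⊕ V)) (am : Mi → A)
    (tn : Ni → Tm s (L ⊕ V)) (bn : Ni → A)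
    (θl : L → DTm s M V) (cmp : (l : L) → Kl l → CmpOp) (p : (l : L) → Kl l → ℝ≥0∞)
    (Y : L → Set V) (Wv : Set V) (Z : Set (L → V)) (μ : Mi → (L → V) → M),
    -- the premises are exactly as prescribed by the format
    r.prem =
      (⋃ m : Mi, ⋃ z ∈ Z,
        {Lit.pos ((tm m).bind (zren z)) (am m) (DTm.dvar (μ m z))}) ∪
      (⋃ n : Ni, ⋃ z ∈ Z, {Lit.neg ((tn n).bind (zren z)) (bn n)}) ∪
      (⋃ l : L, ⋃ k : Kl l,
        {Lit.quant (θl l) (Tm.var '' (Y l)) (cmp l k) (p l k)}) ∧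
    -- quantitative comparisons are `>`, `≥` with bounds in [0,1]
    (∀ l k, cmp l k = CmpOp.gt ∨ cmp l k = CmpOp.ge) ∧
    (∀ l k, p l k ≤ 1) ∧
    -- condition 1
    (∀ l, Cardinal.aleph0 ≤ Cardinal.mk (Y l)) ∧
    (∀ l : L, Cardinal.mk L < Cardinal.mk (Y l)) ∧
    -- condition 2: Z is a diagonal set over the Yₗ, extra variables from Wv
    (∀ w ∈ Wv, ∀ l, w ∉ Y l) ∧
    (∀ z ∈ Z, ∀ l, z l ∈ Y l) ∧
    (∀ l, ∀ y ∈ Y l, ∃ z ∈ Z, z l = y) ∧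
    (∀ z ∈ Z, ∀ z' ∈ Z, (∃ l, z l = z' l) → z = z') ∧
    (∀ m, ∀ v : V, Sum.inr v ∈ (tm m).vars → v ∈ Wv) ∧
    (∀ n, ∀ v : V, Sum.inr v ∈ (tn n).vars → v ∈ Wv) ∧
    -- condition 3: all the μ's are different
    (∀ m z m' z', z ∈ Z → z' ∈ Z → μ m z = μ m' z' → m = m' ∧ z = z') ∧
    -- condition 4: symmetry condition on occurrences in θ and the θₗ
    (∀ m, ∀ z ∈ Z, ∀ z' ∈ Z,
      μ m z ∈ r.tgt.varsM ∪ ⋃ l, (θl l).varsM →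
      μ m z' ∈ r.tgt.varsM ∪ ⋃ l, (θl l).varsM → z = z') ∧
    -- condition 5
    (∀ l, Y l ∩ xs = ∅) ∧
    (∀ l l', l ≠ l' → Y l ∩ Y l' = ∅) ∧
    -- condition 7
    (∀ l, (θl l).varsT ∩ (xs ∪ ⋃ l', Y l') = ∅)

/-- The `ntμfθ` format. -/
def Rule.IsNTF (r : Rule s M V A) : Prop :=
  ∃ (f : s.F) (x : Fin (s.ar f) → V),
    Function.Injective x ∧
    r.src = Tm.app f (fun i => Tm.var (x i)) ∧
    r.PremFormat (Set.range x)

/-- The `ntμxθ` format. -/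
def Rule.IsNTX (r : Rule s M V A) : Prop :=
  ∃ x₀ : V, r.src = Tm.var x₀ ∧ r.PremFormat {x₀}

/-- The `nxμfθ` format: `ntμfθ` where the sources of positive premises are variables. -/
def Rule.IsNXF (r : Rule s M V A) : Prop :=
  r.IsNTF ∧ ∀ l ∈ r.prem, ∀ t a θ, l = Lit.pos t a θ → ∃ v, t = Tm.var v

/-- Rules whose positive premises have a variable source and a distribution-variable
target (`nxμtθ`). -/
def NxMuTPrem (H : Set (Lit s M V A)) : Prop :=
  ∀ l ∈ H, ∀ t a θ, l = Lit.pos t a θ →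
    (∃ v, t = Tm.var v) ∧ ∃ μ, θ = DTm.dvar μ

/-- The edge relation of the variable dependency graph of the positive and quantitative
premises of a rule. -/
def Rule.depEdge (r : Rule s M V A) : (V ⊕ M) → (V ⊕ M) → Prop := fun u w =>
  (∃ l ∈ r.prem, ∃ t a θ, l = Lit.pos t a θ ∧
    (∃ x ∈ Tm.vars t, u = Sum.inl x) ∧ (∃ μ ∈ DTm.varsM θ, w = Sum.inr μ)) ∨
  (∃ l ∈ r.prem, ∃ θ W c q, l = Lit.quant θ W c q ∧
    ((∃ x ∈ DTm.varsT θ, u = Sum.inl x) ∨ (∃ μ ∈ DTm.varsM θ, u = Sum.inr μ)) ∧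
    (∃ y, w = Sum.inl y ∧ Tm.var y ∈ W))

/-- A rule is well-founded if every backward chain of edges in its variable dependency
graph is finite. -/
def Rule.WFR (r : Rule s M V A) : Prop := WellFounded r.depEdge

/-- No free variables: every term variable occurring in the rule occurs in the source of
the conclusion or in a set `W` of a quantitative premise, and every distribution variable
occurs as the target of a positive premise. -/
def Rule.NoFree (r : Rule s M V A) : Prop :=
  (∀ x ∈ r.varsT, x ∈ r.src.vars ∨
    ∃ l ∈ r.prem, ∃ θ W c q, l = Lit.quant θ W c q ∧ Tm.var x ∈ W) ∧
  (∀ μ ∈ r.varsM, ∃ l ∈ r.prem, ∃ t a, l = Lit.pos t a (DTm.dvar μ))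

/-- The pntree format: well-founded `nxμfθ` rules without free variables. -/
def Rule.IsPntree (r : Rule s M V A) : Prop := r.IsNXF ∧ r.WFR ∧ r.NoFree

/-! ### Composition and iteration of substitutions -/

def Subst.comp (σ τ : Subst s M V) : Subst s M V :=
  ⟨fun x => (τ.tm x).bind σ.tm, fun μ => (τ.dm μ).subst σ.tm σ.dm⟩

def Subst.iter (ρ : Subst s M V) : ℕ → Subst s M V
  | 0 => ⟨Tm.var, DTm.dvar⟩
  | n + 1 => ρ.comp (ρ.iter n)

/-- A unifier for a substitution. -/
def Subst.Unifies (σ ρ : Subst s M V) : Prop := σ.comp ρ = σ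

/-! ### Pushforward products of distributions -/

/-- The pushforward `(∏ᵢ πᵢ) ∘ g⁻¹` as a mass function on closed terms. -/
noncomputable def pushMass {n : ℕ} (g : (Fin n → CTm s) → CTm s)
    (π : Fin n → PMF (CTm s)) : CTm s → ℝ≥0∞ :=
  fun u => ∑' v : Fin n → CTm s, (if g v = u then ∏ k, π k (v k) else 0)

/-!
Under a strict stratification every premise, positive or negative, of a proper closed rule
instance with conclusion `ψ` speaks about transitions in strata strictly below `S ψ`. Hence
whether `ψ` is supported by a relation depends only on that relation below `S ψ`. This collapses
the inner iteration within each stratum of `→_{P,S}` to a single step, which makes `→_{P,S}` a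
supported model, and well-founded induction on strata shows that two supported models coincide.
-/

/-- The right-hand side of `IsSupportedModel`. -/
def SupportedBy (P : PTSS s M V A) (τ : TRel s A) (ψ : PLit s A) : Prop :=
  ∃ r ∈ P.R, ∃ ρ : CSubst s M V,
    ρ.ProperFor r.prem ∧ r.Matches ρ ψ ∧ ∀ l ∈ r.prem, l.SatC τ ρ

def AgreeBelow (S : PLit s A → Ordinal.{0}) (β : Ordinal.{0}) (τ₁ τ₂ : TRel s A) : Prop :=
  ∀ ψ, S ψ < β → (ψ ∈ τ₁ ↔ ψ ∈ τ₂)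

section StrictStrat

variable {P : PTSS s M V A} {S : PLit s A → Ordinal.{0}}

lemma Lit.satC_iff_of_agreeBelow (hS : IsStrictStrat P S) {r : Rule s M V A} (hr : r ∈ P.R)
    {ρ : CSubst s M V} (hρ : ρ.ProperFor r.prem) {ψ : PLit s A} (hψ : r.Matches ρ ψ)
    {τ₁ τ₂ : TRel s A} (hagree : AgreeBelow S (S ψ) τ₁ τ₂) {l : Lit s M V A}
    (hl : l ∈ r.prem) : l.SatC τ₁ ρ ↔ l.SatC τ₂ ρ := by
  obtain ⟨hsrc, hlbl, htgt⟩ := hψ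
  have hψ : ψ = (r.src.bind ρ.tm, r.lbl, ψ.2.2) := Prod.ext hsrc (Prod.ext hlbl rfl)
  cases l with
  | pos t a θ =>
    refine exists_congr fun π => and_congr_right fun hπ => hagree _ ?_
    rw [hψ]
    exact hS.2 r hr ρ hρ ψ.2.2 htgt _ hl t a θ rfl π hπ
  | neg t a =>
    refine forall_congr' fun π => not_congr (hagree _ ?_)
    rw [hψ]
    exact (hS.1 r hr ρ hρ ψ.2.2 htgt).2 _ hl t a rfl π
  | quant θ W c q => exact Iff.rfl

lemma supportedBy_iff_of_agreeBelow (hS : IsStrictStrat P S) {τ₁ τ₂ : TRel s A}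
    {ψ : PLit s A} (hagree : AgreeBelow S (S ψ) τ₁ τ₂) :
    SupportedBy P τ₁ ψ ↔ SupportedBy P τ₂ ψ := by
  refine exists_congr fun r => and_congr_right fun hr => exists_congr fun ρ => ?_
  refine and_congr_right fun hρ => and_congr_right fun hψ => ?_
  exact forall₂_congr fun l hl => Lit.satC_iff_of_agreeBelow hS hr hρ hψ hagree hl

theorem eq_of_isSupportedModel (hS : IsStrictStrat P S) {τ₁ τ₂ : TRel s A}
    (h₁ : IsSupportedModel P τ₁) (h₂ : IsSupportedModel P τ₂) : τ₁ = τ₂ := by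
  ext ψ
  induction hβ : S ψ using WellFoundedLT.induction generalizing ψ with
  | _ β ih =>
    rw [h₁ ψ, h₂ ψ]
    exact supportedBy_iff_of_agreeBelow hS fun ψ' hψ' => ih _ (hβ ▸ hψ') ψ' rfl

lemma stageJ_eq (low : TRel s A) (β : Ordinal.{0}) (j : Ordinal.{1}) :
    stageJ P S low β j =
      { ψ | S ψ = β ∧ ∃ r ∈ P.R, ∃ ρ : CSubst s M V,
          ρ.ProperFor r.prem ∧ r.Matches ρ ψ ∧
          (∀ l ∈ r.prem, (l.IsPos ∨ l.IsQuant) →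
            l.SatC (low ∪ ⋃ j' : {k : Ordinal.{1} // k < j}, stageJ P S low β j'.1) ρ) ∧
          (∀ l ∈ r.prem, l.IsNeg → l.SatC low ρ) } :=
  WellFounded.fix_eq _ _ j

lemma Lit.isPos_or_isNeg_or_isQuant (l : Lit s M V A) : l.IsPos ∨ l.IsNeg ∨ l.IsQuant := by
  cases l <;> simp [Lit.IsPos, Lit.IsNeg, Lit.IsQuant]

/-- Under a strict stratification no positive premise of a transition of stratum `β` lies in
stratum `β`, so the inner iteration defining the stratum is constant. -/
lemma stageJ_eq_supportedBy (hS : IsStrictStrat P S) (low : TRel s A) (β : Ordinal.{0})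
    (j : Ordinal.{1}) : stageJ P S low β j = { ψ | S ψ = β ∧ SupportedBy P low ψ } := by
  induction j using WellFoundedLT.induction with
  | _ j ih =>
    rw [stageJ_eq]
    ext ψ
    refine and_congr_right fun hψβ => ?_
    set earlier := ⋃ j' : {k : Ordinal.{1} // k < j}, stageJ P S low β j'.1
    have hagree : AgreeBelow S (S ψ) (low ∪ earlier) low := by
      intro ψ' hψ'
      suffices ψ' ∉ earlier by simp [this]
      simp only [earlier, Set.mem_iUnion, not_exists]
      intro ⟨j', hj'⟩ hmem
      rw [ih j' hj'] at hmem
      exact hψ'.ne (hmem.1.trans hψβ.symm)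
    refine exists_congr fun r => and_congr_right fun hr => exists_congr fun ρ => ?_
    refine and_congr_right fun hρ => and_congr_right fun hψ => ?_
    have hsat : ∀ l ∈ r.prem, l.SatC (low ∪ earlier) ρ ↔ l.SatC low ρ :=
      fun l hl => Lit.satC_iff_of_agreeBelow hS hr hρ hψ hagree hl
    constructor
    · rintro ⟨hposQuant, hneg⟩ l hl
      rcases l.isPos_or_isNeg_or_isQuant with h | h | h
      · exact (hsat l hl).1 (hposQuant l hl (.inl h))
      · exact hneg l hl h
      · exact (hsat l hl).1 (hposQuant l hl (.inr h))
    · intro h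
      exact ⟨fun l hl _ => (hsat l hl).2 (h l hl), fun l hl _ => h l hl⟩

lemma stratum_eq (β : Ordinal.{0}) :
    stratum P S β =
      ⋃ j : {j : Ordinal.{1} // j ≤ (DP P).ord},
        stageJ P S (⋃ γ : {γ : Ordinal.{0} // γ < β}, stratum P S γ.1) β j.1 :=
  WellFounded.fix_eq _ _ β

lemma stratum_eq_supportedBy (hS : IsStrictStrat P S) (β : Ordinal.{0}) :
    stratum P S β =
      { ψ | S ψ = β ∧ SupportedBy P (⋃ γ : {γ : Ordinal.{0} // γ < β}, stratum P S γ.1) ψ } := by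
  rw [stratum_eq]
  ext ψ
  simp only [Set.mem_iUnion, stageJ_eq_supportedBy hS]
  exact ⟨fun ⟨_, h⟩ => h, fun h => ⟨⟨0, zero_le⟩, h⟩⟩

lemma eq_of_mem_stratum (hS : IsStrictStrat P S) {β : Ordinal.{0}} {ψ : PLit s A}
    (h : ψ ∈ stratum P S β) : S ψ = β := by
  rw [stratum_eq_supportedBy hS] at h
  exact h.1

lemma mem_assocRel_iff_mem_stratum (hS : IsStrictStrat P S) {ψ : PLit s A} :
    ψ ∈ assocRel P S ↔ ψ ∈ stratum P S (S ψ) := by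
  refine ⟨fun h => ?_, fun h => Set.mem_iUnion.2 ⟨_, h⟩⟩
  obtain ⟨β, hβ⟩ := Set.mem_iUnion.1 h
  rwa [eq_of_mem_stratum hS hβ]

theorem isSupportedModel_assocRel (hS : IsStrictStrat P S) :
    IsSupportedModel P (assocRel P S) := by
  intro ψ
  rw [mem_assocRel_iff_mem_stratum hS, stratum_eq_supportedBy hS]
  refine (and_iff_right rfl).trans (supportedBy_iff_of_agreeBelow hS fun ψ' hψ' => ?_)
  rw [mem_assocRel_iff_mem_stratum hS, Set.mem_iUnion]
  refine ⟨fun ⟨_, h⟩ => ?_, fun h => ⟨⟨_, hψ'⟩, h⟩⟩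
  rwa [eq_of_mem_stratum hS h]

end StrictStrat

theorem unique_supported_model_of_strict_stratification_general
    (s : Sig) (M V A : Type)
    (P : PTSS s M V A) (S : PLit s A → Ordinal.{0}) (hS : IsStrictStrat P S) :
    IsSupportedModel P (assocRel P S) ∧
    ∀ τ : TRel s A, IsSupportedModel P τ → τ = assocRel P S :=
  ⟨isSupportedModel_assocRel hS,
    fun _ hτ => eq_of_isSupportedModel hS hτ (isSupportedModel_assocRel hS)⟩

/-- if `S` is a strict stratification of `P`, then `→_{P,S}` is the only
supported model of `P`. -/
theorem unique_supported_model_of_strict_stratification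
    (s : Sig) (M V A : Type) [Infinite V] [Infinite M]
    (P : PTSS s M V A) (S : PLit s A → Ordinal.{0}) (hS : IsStrictStrat P S) :
    IsSupportedModel P (assocRel P S) ∧
    ∀ τ : TRel s A, IsSupportedModel P τ → τ = assocRel P S :=
  unique_supported_model_of_strict_stratification_general s M V A P S hS

end PTSSpec
end

section
/- If a substitution ρ is unifiable, then there is a most general unifier σ̂ for ρ, i.e. a unifier σ̂ such that: (i) every unifier σ for ρ is also a unifier for σ̂; (ii) for every variable ζ, if ρ(ζ)=ζ then σ̂(ζ)=ζ; and (iii) for every variable ζ, if ρⁿ(ζ) is a variable for all n≥0, then σ̂(ζ) is a variable. -/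
open scoped ENNReal Classical

namespace PTSSpec

variable {s : Sig} {M V A : Type}

/-! ### Auxiliary machinery for the mgu theorem -/

theorem Tm.var_injective {α : Type} : Function.Injective (Tm.var : α → Tm s α) :=
  fun _ _ h => by injection h

theorem DTm.dvar_injective : Function.Injective (DTm.dvar : M → DTm s M V) :=
  fun _ _ h => by injection h

theorem Tm.mem_vars_var {α : Type} {x y : α} : y ∈ (Tm.var x : Tm s α).vars ↔ y = x := by
  simp [Tm.vars]

theorem Tm.bind_congr {α β : Type} {t : Tm s α} {f g : α → Tm s β}
    (h : ∀ y ∈ t.vars, f y = g y) : t.bind f = t.bind g := by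
  induction t with
  | var x => exact h x (Tm.mem_vars_var.2 rfl)
  | app fn ts ih =>
    simp only [Tm.bind]
    congr 1
    funext i
    exact ih i fun y hy => h y (by simp only [Tm.vars]; exact Set.mem_iUnion.2 ⟨i, hy⟩)

theorem Tm.bind_assoc {α β γ : Type} (t : Tm s α) (f : α → Tm s β) (g : β → Tm s γ) :
    (t.bind f).bind g = t.bind fun y => (f y).bind g := by
  induction t with
  | var x => rfl
  | app fn ts ih =>
    simp only [Tm.bind]
    congr 1
    funext i
    exact ih i

/-- Size of a term. -/
def Tm.sz {α : Type} : Tm s α → ℕ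
  | .var _ => 1
  | .app _ ts => 1 + ∑ i, (ts i).sz

theorem Tm.sz_bind_le {α β : Type} {t : Tm s α} (f : α → Tm s β) {y : α}
    (hy : y ∈ t.vars) : (f y).sz ≤ (t.bind f).sz := by
  induction t with
  | var x => rw [Tm.mem_vars_var] at hy; subst hy; exact le_rfl
  | app fn ts ih =>
    simp only [Tm.vars] at hy
    obtain ⟨i, hi⟩ := Set.mem_iUnion.1 hy
    calc (f y).sz ≤ ((ts i).bind f).sz := ih i hi
    _ ≤ ∑ j, ((ts j).bind f).sz :=
      Finset.single_le_sum (f := fun j => ((ts j).bind f).sz)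
        (fun j _ => Nat.zero_le _) (Finset.mem_univ i)
    _ ≤ ((Tm.app fn ts).bind f).sz := by simp only [Tm.bind, Tm.sz]; omega

theorem Tm.sz_bind_lt {α β : Type} {t : Tm s α} (f : α → Tm s β) {y : α}
    (hy : y ∈ t.vars) (ht : ∀ z, t ≠ Tm.var z) : (f y).sz < (t.bind f).sz := by
  cases t with
  | var x => exact absurd rfl (ht x)
  | app fn ts =>
    simp only [Tm.vars] at hy
    obtain ⟨i, hi⟩ := Set.mem_iUnion.1 hy
    have h1 : (f y).sz ≤ ∑ j, ((ts j).bind f).sz :=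
      le_trans (Tm.sz_bind_le f hi)
        (Finset.single_le_sum (f := fun j => ((ts j).bind f).sz)
          (fun j _ => Nat.zero_le _) (Finset.mem_univ i))
    simp only [Tm.bind, Tm.sz]
    omega

/-- Ordinal-valued size of a distribution term. -/
noncomputable def DTm.dsz : DTm s M V → Ordinal.{0}
  | .dvar _ => 0
  | .dirac _ => 0
  | .comb ι _ n _ θ _ _ => ⨆ x : (i : ι) × Fin (n i), Order.succ (θ x.1 x.2).dsz

theorem DTm.dsz_subst_le {θ : DTm s M V} (a : V → Tm s V) (b : M → DTm s M V) {ν : M}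
    (hν : ν ∈ θ.varsM) : (b ν).dsz ≤ (θ.subst a b).dsz := by
  induction θ with
  | dvar μ => simp only [DTm.varsM, Set.mem_singleton_iff] at hν; subst hν; exact le_rfl
  | dirac t => simp only [DTm.varsM] at hν; exact absurd hν (Set.notMem_empty ν)
  | comb ι p n g θ h1 h2 ih =>
    simp only [DTm.varsM] at hν
    obtain ⟨i, hi⟩ := Set.mem_iUnion.1 hν
    obtain ⟨k, hk⟩ := Set.mem_iUnion.1 hi
    calc (b ν).dsz ≤ ((θ i k).subst a b).dsz := ih i k hk
    _ ≤ Order.succ ((θ i k).subst a b).dsz := Order.le_succ _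
    _ ≤ ((DTm.comb ι p n g θ h1 h2).subst a b).dsz := by
        simp only [DTm.subst, DTm.dsz]
        exact Ordinal.le_iSup
          (fun x : (i : ι) × Fin (n i) => Order.succ ((θ x.1 x.2).subst a b).dsz)
          (⟨i, k⟩ : (i : ι) × Fin (n i))

theorem DTm.dsz_subst_lt {θ : DTm s M V} (a : V → Tm s V) (b : M → DTm s M V) {ν : M}
    (hν : ν ∈ θ.varsM) (hnd : ∀ μ, θ ≠ DTm.dvar μ) : (b ν).dsz < (θ.subst a b).dsz := by
  cases θ with
  | dvar μ => exact absurd rfl (hnd μ)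
  | dirac t => simp only [DTm.varsM] at hν; exact absurd hν (Set.notMem_empty ν)
  | comb ι p n g θ h1 h2 =>
    simp only [DTm.varsM] at hν
    obtain ⟨i, hi⟩ := Set.mem_iUnion.1 hν
    obtain ⟨k, hk⟩ := Set.mem_iUnion.1 hi
    calc (b ν).dsz < Order.succ (((θ i k).subst a b).dsz) :=
        Order.lt_succ_iff.2 (DTm.dsz_subst_le a b hk)
    _ ≤ ((DTm.comb ι p n g θ h1 h2).subst a b).dsz := by
        simp only [DTm.subst, DTm.dsz]
        exact Ordinal.le_iSup
          (fun x : (i : ι) × Fin (n i) => Order.succ ((θ x.1 x.2).subst a b).dsz)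
          (⟨i, k⟩ : (i : ι) × Fin (n i))

theorem DTm.subst_congr {θ : DTm s M V} {a a' : V → Tm s V} {b b' : M → DTm s M V}
    (hT : ∀ x ∈ θ.varsT, a x = a' x) (hM : ∀ ν ∈ θ.varsM, b ν = b' ν) :
    θ.subst a b = θ.subst a' b' := by
  induction θ with
  | dvar μ => exact hM μ (by simp [DTm.varsM])
  | dirac t =>
    simp only [DTm.subst]
    rw [Tm.bind_congr fun y hy => hT y (by simpa [DTm.varsT] using hy)]
  | comb ι p n g θ h1 h2 ih =>
    simp only [DTm.subst]
    congr 1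
    funext i k
    exact ih i k
      (fun x hx => hT x (by
        simp only [DTm.varsT]
        exact Set.mem_iUnion.2 ⟨i, Set.mem_iUnion.2 ⟨k, hx⟩⟩))
      (fun ν hν => hM ν (by
        simp only [DTm.varsM]
        exact Set.mem_iUnion.2 ⟨i, Set.mem_iUnion.2 ⟨k, hν⟩⟩))

theorem DTm.subst_assoc (θ : DTm s M V) (a : V → Tm s V) (b : M → DTm s M V)
    (c : V → Tm s V) (d : M → DTm s M V) :
    (θ.subst a b).subst c d =
      θ.subst (fun x => (a x).bind c) (fun μ => (b μ).subst c d) := by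
  induction θ with
  | dvar μ => rfl
  | dirac t => simp only [DTm.subst, Tm.bind_assoc]
  | comb ι p n g θ h1 h2 ih =>
    simp only [DTm.subst]
    congr 1
    funext i k
    exact ih i k

theorem Subst.ext' {σ τ : Subst s M V} (h1 : σ.tm = τ.tm) (h2 : σ.dm = τ.dm) : σ = τ := by
  cases σ; cases τ; cases h1; cases h2; rfl

theorem Subst.iter_succ_tm (ρ : Subst s M V) (n : ℕ) (x : V) :
    (ρ.iter (n + 1)).tm x = ((ρ.iter n).tm x).bind ρ.tm := rfl

theorem Subst.iter_succ_dm (ρ : Subst s M V) (n : ℕ) (μ : M) :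
    (ρ.iter (n + 1)).dm μ = ((ρ.iter n).dm μ).subst ρ.tm ρ.dm := rfl

theorem Subst.Unifies.tm_eq {σ ρ : Subst s M V} (h : σ.Unifies ρ) :
    (fun x => (ρ.tm x).bind σ.tm) = σ.tm := congrArg Subst.tm h

theorem Subst.Unifies.dm_eq {σ ρ : Subst s M V} (h : σ.Unifies ρ) :
    (fun μ => (ρ.dm μ).subst σ.tm σ.dm) = σ.dm := congrArg Subst.dm h

theorem Subst.Unifies.iter_tm {σ ρ : Subst s M V} (h : σ.Unifies ρ) :
    ∀ n x, ((ρ.iter n).tm x).bind σ.tm = σ.tm x := by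
  intro n
  induction n with
  | zero => intro x; rfl
  | succ n ih =>
    intro x
    rw [Subst.iter_succ_tm, Tm.bind_assoc, h.tm_eq]
    exact ih x

theorem Subst.Unifies.iter_dm {σ ρ : Subst s M V} (h : σ.Unifies ρ) :
    ∀ n μ, ((ρ.iter n).dm μ).subst σ.tm σ.dm = σ.dm μ := by
  intro n
  induction n with
  | zero => intro μ; rfl
  | succ n ih =>
    intro μ
    rw [Subst.iter_succ_dm, DTm.subst_assoc, h.tm_eq, h.dm_eq]
    exact ih μ

section Orbit

universe u

variable {W : Type} {T : Type u}

/-- Iterated orbit of a variable under a substitution step `f`, as long as values stay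
variables (`emb`). -/
noncomputable def orbA (emb f : W → T) : ℕ → W → W
  | 0, x => x
  | n + 1, x => if h : ∃ y, f (orbA emb f n x) = emb y then h.choose else orbA emb f n x

/-- A variable all whose iterates stay variables. -/
def StabA (emb : W → T) (itn : ℕ → W → T) (x : W) : Prop := ∀ n, ∃ y, itn n x = emb y

/-- All stable variables whose orbit meets the orbit of `x`. -/
noncomputable def clsA (emb f : W → T) (itn : ℕ → W → T) (x : W) : Set W :=
  {z | StabA emb itn z ∧ ∃ n m, orbA emb f n z = orbA emb f m x}

/-- A canonical representative of a set of variables, preferring fixed points of `f`. -/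
noncomputable def repA [Nonempty W] (emb f : W → T) (S : Set W) : W :=
  if h : ∃ z, z ∈ S ∧ f z = emb z then h.choose
  else if h2 : ∃ z, z ∈ S then h2.choose else Classical.arbitrary W

/-- The first iterate at which `x` stops being a variable. -/
noncomputable def nidxA (emb : W → T) (itn : ℕ → W → T) (x : W) : ℕ :=
  if h : ∃ n, ∀ y, itn n x ≠ emb y then Nat.find h else 0

/-- The first non-variable iterate of `x`. -/
noncomputable def tXA (emb f : W → T) (itn : ℕ → W → T) (x : W) : T :=
  f (orbA emb f (nidxA emb itn x - 1) x)

variable {emb f : W → T} {itn : ℕ → W → T}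

theorem not_stabA_iff {x : W} :
    ¬StabA emb itn x ↔ ∃ n, ∀ y, itn n x ≠ emb y := by
  simp only [StabA, not_forall, not_exists]

section Laws

variable (hinj : Function.Injective emb)
variable (h0 : ∀ x, itn 0 x = emb x)
variable (hsucc : ∀ n x y, itn n x = emb y → itn (n + 1) x = f y)
variable (hshift : ∀ x y, f x = emb y → ∀ n, itn (n + 1) x = itn n y)

set_option linter.unusedVariables false

include h0 hsucc in
theorem orbA_spec {x : W} : ∀ n, (∀ k, k ≤ n → ∃ y, itn k x = emb y) →
    itn n x = emb (orbA emb f n x) := by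
  intro n
  induction n with
  | zero => intro _; exact h0 x
  | succ n ih =>
    intro h
    have h1 : itn n x = emb (orbA emb f n x) := ih fun k hk => h k (le_trans hk (Nat.le_succ n))
    have h2 : itn (n + 1) x = f (orbA emb f n x) := hsucc _ _ _ h1
    have h3 : ∃ y, f (orbA emb f n x) = emb y := by
      obtain ⟨y, hy⟩ := h (n + 1) le_rfl
      exact ⟨y, h2 ▸ hy⟩
    rw [h2, orbA, dif_pos h3]
    exact h3.choose_spec

include h0 hsucc in
theorem stabA_orb {x : W} (hx : StabA emb itn x) (n : ℕ) :
    itn n x = emb (orbA emb f n x) :=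
  orbA_spec h0 hsucc n fun k _ => hx k

include h0 hsucc in
theorem stabA_shift_orb {x : W} (hx : StabA emb itn x) :
    ∀ m n, itn m (orbA emb f n x) = emb (orbA emb f (m + n) x) := by
  intro m
  induction m with
  | zero => intro n; rw [h0, Nat.zero_add]
  | succ m ih =>
    intro n
    have h1 : itn (m + 1) (orbA emb f n x) = f (orbA emb f (m + n) x) := hsucc _ _ _ (ih n)
    have h3 : itn (m + n + 1) x = f (orbA emb f (m + n) x) :=
      hsucc _ _ _ (stabA_orb h0 hsucc hx (m + n))
    have h4 : itn (m + n + 1) x = emb (orbA emb f (m + n + 1) x) := stabA_orb h0 hsucc hx _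
    have e : m + 1 + n = m + n + 1 := by omega
    rw [h1, ← h3, h4, e]

include h0 hsucc in
theorem stabA_of_orb {x : W} (hx : StabA emb itn x) (n : ℕ) :
    StabA emb itn (orbA emb f n x) :=
  fun m => ⟨orbA emb f (m + n) x, stabA_shift_orb h0 hsucc hx m n⟩

include h0 hsucc in
theorem orbA_add {x : W} (hx : StabA emb itn x) :
    ∀ m n, orbA emb f m (orbA emb f n x) = orbA emb f (m + n) x := by
  intro m
  induction m with
  | zero => intro n; rw [Nat.zero_add]; rfl
  | succ m ih =>
    intro n
    have e : m + 1 + n = m + n + 1 := by omega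
    rw [e]
    show (if h : ∃ y, f (orbA emb f m (orbA emb f n x)) = emb y then h.choose
        else orbA emb f m (orbA emb f n x)) =
      (if h : ∃ y, f (orbA emb f (m + n) x) = emb y then h.choose else orbA emb f (m + n) x)
    rw [ih n]

include h0 hsucc in
theorem clsA_orb {x : W} (hx : StabA emb itn x) (k : ℕ) :
    clsA emb f itn (orbA emb f k x) = clsA emb f itn x := by
  ext z
  constructor
  · rintro ⟨hz, n, m, he⟩
    refine ⟨hz, n, m + k, ?_⟩
    rw [he, orbA_add h0 hsucc hx]
  · rintro ⟨hz, n, m, he⟩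
    refine ⟨hz, k + n, m, ?_⟩
    rw [← orbA_add h0 hsucc hz, he, orbA_add h0 hsucc hx, Nat.add_comm k m,
      ← orbA_add h0 hsucc hx]

include hinj in
theorem orbA_fix {x : W} (hf : f x = emb x) : ∀ n, orbA emb f n x = x := by
  intro n
  induction n with
  | zero => rfl
  | succ n ih =>
    show (if h : ∃ y, f (orbA emb f n x) = emb y then h.choose else orbA emb f n x) = x
    rw [ih, dif_pos ⟨x, hf⟩]
    exact hinj (((Exists.choose_spec (⟨x, hf⟩ : ∃ y, f x = emb y)).symm).trans hf)

include h0 hsucc in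
theorem stabA_fix {x : W} (hf : f x = emb x) : StabA emb itn x := by
  have key : ∀ n, itn n x = emb x := by
    intro n
    induction n with
    | zero => exact h0 x
    | succ n ih => rw [hsucc _ _ _ ih, hf]
  exact fun n => ⟨x, key n⟩

theorem repA_mem [Nonempty W] {S : Set W} (hS : ∃ z, z ∈ S) : repA emb f S ∈ S := by
  unfold repA
  by_cases h : ∃ z, z ∈ S ∧ f z = emb z
  · rw [dif_pos h]; exact h.choose_spec.1
  · rw [dif_neg h, dif_pos hS]; exact hS.choose_spec

theorem repA_fix [Nonempty W] {S : Set W} {x : W} (hx : x ∈ S) (hf : f x = emb x)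
    (huniq : ∀ z ∈ S, f z = emb z → z = x) : repA emb f S = x := by
  have h : ∃ z, z ∈ S ∧ f z = emb z := ⟨x, hx, hf⟩
  unfold repA
  rw [dif_pos h]
  exact huniq _ h.choose_spec.1 h.choose_spec.2

include hinj in
theorem clsA_fix_unique {x : W} (hfx : f x = emb x) :
    ∀ z ∈ clsA emb f itn x, f z = emb z → z = x := by
  rintro z ⟨_, n, m, he⟩ hfz
  rw [orbA_fix hinj hfz, orbA_fix hinj hfx] at he
  exact he

theorem mem_clsA_self {x : W} (hx : StabA emb itn x) : x ∈ clsA emb f itn x :=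
  ⟨hx, 0, 0, rfl⟩

theorem nidxA_lt {x : W} {k : ℕ} (hk : k < nidxA emb itn x) : ∃ y, itn k x = emb y := by
  unfold nidxA at hk
  split_ifs at hk with h
  · have := Nat.find_min h hk
    push_neg at this
    exact this
  · omega

include h0 in
theorem nidxA_pos {x : W} (hx : ∃ n, ∀ y, itn n x ≠ emb y) : 0 < nidxA emb itn x := by
  unfold nidxA
  rw [dif_pos hx]
  rw [Nat.find_pos]
  push_neg
  exact ⟨x, h0 x⟩

theorem nidxA_spec {x : W} (hx : ∃ n, ∀ y, itn n x ≠ emb y) :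
    ∀ y, itn (nidxA emb itn x) x ≠ emb y := by
  unfold nidxA
  rw [dif_pos hx]
  exact Nat.find_spec hx

include h0 hsucc in
theorem tXA_spec {x : W} (hx : ∃ n, ∀ y, itn n x ≠ emb y) :
    itn (nidxA emb itn x) x = tXA emb f itn x := by
  have hpos := nidxA_pos h0 hx
  have h1 : itn (nidxA emb itn x - 1) x = emb (orbA emb f (nidxA emb itn x - 1) x) :=
    orbA_spec h0 hsucc _ (fun k hk => nidxA_lt (by omega))
  have h2 := hsucc _ _ _ h1
  have e : nidxA emb itn x - 1 + 1 = nidxA emb itn x := by omega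
  rw [e] at h2
  exact h2

include h0 hsucc in
theorem tXA_ne {x : W} (hx : ∃ n, ∀ y, itn n x ≠ emb y) :
    ∀ y, tXA emb f itn x ≠ emb y := by
  rw [← tXA_spec h0 hsucc hx]
  exact nidxA_spec hx

include h0 hshift in
theorem unstabA_shift {x y : W} (hf : f x = emb y) (hx : ¬StabA emb itn x) :
    ¬StabA emb itn y := by
  intro hy
  apply hx
  intro n
  cases n with
  | zero => exact ⟨x, h0 x⟩
  | succ n => rw [hshift x y hf]; exact hy n

include hinj in
theorem orbA_shift {x y : W} (hf : f x = emb y) :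
    ∀ m, orbA emb f m y = orbA emb f (m + 1) x := by
  intro m
  induction m with
  | zero =>
    show y = (if h : ∃ z, f (orbA emb f 0 x) = emb z then h.choose else orbA emb f 0 x)
    rw [dif_pos ⟨y, hf⟩]
    exact hinj ((Exists.choose_spec (⟨y, hf⟩ : ∃ z, f x = emb z)).symm.trans hf).symm
  | succ m ih =>
    show (if h : ∃ z, f (orbA emb f m y) = emb z then h.choose else orbA emb f m y) =
      (if h : ∃ z, f (orbA emb f (m + 1) x) = emb z then h.choose else orbA emb f (m + 1) x)
    rw [ih]

include h0 hshift in
theorem nidxA_shift {x y : W} (hf : f x = emb y) (hy : ∃ n, ∀ z, itn n y ≠ emb z) :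
    nidxA emb itn x = nidxA emb itn y + 1 := by
  have hx : ∃ n, ∀ z, itn n x ≠ emb z :=
    ⟨nidxA emb itn y + 1, by rw [hshift x y hf]; exact nidxA_spec hy⟩
  unfold nidxA
  rw [dif_pos hx, dif_pos hy]
  rw [Nat.find_eq_iff]
  constructor
  · rw [hshift x y hf]
    exact Nat.find_spec hy
  · intro k hk
    push_neg
    cases k with
    | zero => exact ⟨x, h0 x⟩
    | succ j =>
      rw [hshift x y hf]
      have := Nat.find_min hy (m := j) (by omega)
      push_neg at this
      exact this

include hinj h0 hshift in
theorem tXA_shift {x y : W} (hf : f x = emb y) (hy : ∃ n, ∀ z, itn n y ≠ emb z) :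
    tXA emb f itn x = tXA emb f itn y := by
  unfold tXA
  rw [nidxA_shift h0 hshift hf hy]
  have hpos := nidxA_pos h0 hy
  have e : nidxA emb itn y + 1 - 1 = nidxA emb itn y - 1 + 1 := by omega
  rw [e, ← orbA_shift hinj hf]

include h0 hsucc in
theorem tXA_base {x : W} (hfx : ∀ y, f x ≠ emb y) :
    tXA emb f itn x = f x ∧ (∃ n, ∀ y, itn n x ≠ emb y) := by
  have it1 : itn 1 x = f x := hsucc 0 x x (h0 x)
  have hx : ∃ n, ∀ y, itn n x ≠ emb y := ⟨1, fun y => by rw [it1]; exact hfx y⟩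
  have hn : nidxA emb itn x = 1 := by
    unfold nidxA
    rw [dif_pos hx, Nat.find_eq_iff]
    refine ⟨fun y => by rw [it1]; exact hfx y, ?_⟩
    intro k hk
    push_neg
    have : k = 0 := by omega
    subst this
    exact ⟨x, h0 x⟩
  constructor
  · unfold tXA
    rw [hn]
    rfl
  · exact hx

end Laws

end Orbit

section Hat

variable {s : Sig} {M V : Type}

/-- Iterates of a substitution on term variables. -/
def itnT (ρ : Subst s M V) : ℕ → V → Tm s V := fun n x => (ρ.iter n).tm x

/-- Iterates of a substitution on distribution variables. -/
def itnD (ρ : Subst s M V) : ℕ → M → DTm s M V := fun n μ => (ρ.iter n).dm μ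

theorem itnT_zero (ρ : Subst s M V) : ∀ x, itnT ρ 0 x = Tm.var x := fun _ => rfl

theorem itnT_succ (ρ : Subst s M V) :
    ∀ n x y, itnT ρ n x = Tm.var y → itnT ρ (n + 1) x = ρ.tm y := by
  intro n x y h
  show ((ρ.iter n).tm x).bind ρ.tm = ρ.tm y
  rw [show (ρ.iter n).tm x = Tm.var y from h]
  rfl

theorem itnT_shift (ρ : Subst s M V) :
    ∀ x y, ρ.tm x = Tm.var y → ∀ n, itnT ρ (n + 1) x = itnT ρ n y := by
  intro x y hf n
  induction n with
  | zero => exact hf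
  | succ n ih =>
    show ((ρ.iter (n + 1)).tm x).bind ρ.tm = ((ρ.iter n).tm y).bind ρ.tm
    rw [show (ρ.iter (n + 1)).tm x = (ρ.iter n).tm y from ih]

theorem itnD_zero (ρ : Subst s M V) : ∀ μ, itnD ρ 0 μ = DTm.dvar μ := fun _ => rfl

theorem itnD_succ (ρ : Subst s M V) :
    ∀ n μ ν, itnD ρ n μ = DTm.dvar ν → itnD ρ (n + 1) μ = ρ.dm ν := by
  intro n μ ν h
  show ((ρ.iter n).dm μ).subst ρ.tm ρ.dm = ρ.dm ν
  rw [show (ρ.iter n).dm μ = DTm.dvar ν from h]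
  rfl

theorem itnD_shift (ρ : Subst s M V) :
    ∀ μ ν, ρ.dm μ = DTm.dvar ν → ∀ n, itnD ρ (n + 1) μ = itnD ρ n ν := by
  intro μ ν hf n
  induction n with
  | zero => exact hf
  | succ n ih =>
    show ((ρ.iter (n + 1)).dm μ).subst ρ.tm ρ.dm = ((ρ.iter n).dm ν).subst ρ.tm ρ.dm
    rw [show (ρ.iter (n + 1)).dm μ = (ρ.iter n).dm ν from ih]

/-- The candidate most general unifier, on term variables (guarded recursion on the
size of the image under a fixed unifier `σ`). -/
noncomputable def hatTmAux (ρ σ : Subst s M V) [Nonempty V] : ℕ → V → Tm s V :=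
  WellFounded.fix (wellFounded_lt (α := ℕ)) fun k rec x =>
    if StabA Tm.var (itnT ρ) x then
      Tm.var (repA Tm.var ρ.tm (clsA Tm.var ρ.tm (itnT ρ) x))
    else
      (tXA Tm.var ρ.tm (itnT ρ) x).bind fun y =>
        if h : (σ.tm y).sz < k then rec _ h y else Tm.var y

noncomputable def hatTm (ρ σ : Subst s M V) [Nonempty V] (x : V) : Tm s V :=
  hatTmAux ρ σ (σ.tm x).sz x

/-- The candidate most general unifier, on distribution variables. -/
noncomputable def hatDmAux (ρ σ : Subst s M V) [Nonempty V] [Nonempty M] :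
    Ordinal.{0} → M → DTm s M V :=
  WellFounded.fix (wellFounded_lt (α := Ordinal.{0})) fun o rec μ =>
    if StabA DTm.dvar (itnD ρ) μ then
      DTm.dvar (repA DTm.dvar ρ.dm (clsA DTm.dvar ρ.dm (itnD ρ) μ))
    else
      (tXA DTm.dvar ρ.dm (itnD ρ) μ).subst (hatTm ρ σ) fun ν =>
        if h : (σ.dm ν).dsz < o then rec _ h ν else DTm.dvar ν

noncomputable def hatDm (ρ σ : Subst s M V) [Nonempty V] [Nonempty M] (μ : M) : DTm s M V :=
  hatDmAux ρ σ (σ.dm μ).dsz μ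

variable {ρ σ τ : Subst s M V}

theorem hatTm_stab [Nonempty V] {x : V} (hx : StabA Tm.var (itnT ρ) x) :
    hatTm ρ σ x = Tm.var (repA Tm.var ρ.tm (clsA Tm.var ρ.tm (itnT ρ) x)) := by
  unfold hatTm hatTmAux
  rw [WellFounded.fix_eq, if_pos hx]

theorem hatDm_stab [Nonempty V] [Nonempty M] {μ : M} (hμ : StabA DTm.dvar (itnD ρ) μ) :
    hatDm ρ σ μ = DTm.dvar (repA DTm.dvar ρ.dm (clsA DTm.dvar ρ.dm (itnD ρ) μ)) := by
  unfold hatDm hatDmAux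
  rw [WellFounded.fix_eq, if_pos hμ]

theorem hat_measT (hσ : σ.Unifies ρ) {x : V} (hx : ¬StabA Tm.var (itnT ρ) x) :
    (∀ z, tXA Tm.var ρ.tm (itnT ρ) x ≠ Tm.var z) ∧
      σ.tm x = (tXA Tm.var ρ.tm (itnT ρ) x).bind σ.tm ∧
      ∀ y ∈ (tXA Tm.var ρ.tm (itnT ρ) x).vars, (σ.tm y).sz < (σ.tm x).sz := by
  have hx' := not_stabA_iff.1 hx
  have hne := tXA_ne (f := ρ.tm) (itnT_zero ρ) (itnT_succ ρ) hx'
  have heq : σ.tm x = (tXA Tm.var ρ.tm (itnT ρ) x).bind σ.tm := by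
    rw [← tXA_spec (f := ρ.tm) (itnT_zero ρ) (itnT_succ ρ) hx']
    exact (hσ.iter_tm _ x).symm
  refine ⟨hne, heq, fun y hy => ?_⟩
  rw [heq]
  exact Tm.sz_bind_lt σ.tm hy hne

theorem hat_measD (hσ : σ.Unifies ρ) {μ : M} (hμ : ¬StabA DTm.dvar (itnD ρ) μ) :
    (∀ ν, tXA DTm.dvar ρ.dm (itnD ρ) μ ≠ DTm.dvar ν) ∧
      σ.dm μ = (tXA DTm.dvar ρ.dm (itnD ρ) μ).subst σ.tm σ.dm ∧
      ∀ ν ∈ (tXA DTm.dvar ρ.dm (itnD ρ) μ).varsM, (σ.dm ν).dsz < (σ.dm μ).dsz := by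
  have hμ' := not_stabA_iff.1 hμ
  have hne := tXA_ne (f := ρ.dm) (itnD_zero ρ) (itnD_succ ρ) hμ'
  have heq : σ.dm μ = (tXA DTm.dvar ρ.dm (itnD ρ) μ).subst σ.tm σ.dm := by
    rw [← tXA_spec (f := ρ.dm) (itnD_zero ρ) (itnD_succ ρ) hμ']
    exact (hσ.iter_dm _ μ).symm
  refine ⟨hne, heq, fun ν hν => ?_⟩
  rw [heq]
  exact DTm.dsz_subst_lt σ.tm σ.dm hν hne

theorem hatTm_unstab [Nonempty V] (hσ : σ.Unifies ρ) {x : V}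
    (hx : ¬StabA Tm.var (itnT ρ) x) :
    hatTm ρ σ x = (tXA Tm.var ρ.tm (itnT ρ) x).bind (hatTm ρ σ) := by
  obtain ⟨hne, heq, hlt⟩ := hat_measT hσ hx
  show hatTmAux ρ σ (σ.tm x).sz x = _
  unfold hatTmAux
  rw [WellFounded.fix_eq, if_neg hx]
  exact Tm.bind_congr fun y hy => by rw [dif_pos (hlt y hy)]; rfl

theorem hatDm_unstab [Nonempty V] [Nonempty M] (hσ : σ.Unifies ρ) {μ : M}
    (hμ : ¬StabA DTm.dvar (itnD ρ) μ) :
    hatDm ρ σ μ = (tXA DTm.dvar ρ.dm (itnD ρ) μ).subst (hatTm ρ σ) (hatDm ρ σ) := by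
  obtain ⟨hne, heq, hlt⟩ := hat_measD hσ hμ
  show hatDmAux ρ σ (σ.dm μ).dsz μ = _
  unfold hatDmAux
  rw [WellFounded.fix_eq, if_neg hμ]
  exact DTm.subst_congr (fun y _ => rfl)
    fun ν hν => by rw [dif_pos (hlt ν hν)]; rfl

theorem hat_comp_tm [Nonempty V] (hσ : σ.Unifies ρ) (x : V) :
    (ρ.tm x).bind (hatTm ρ σ) = hatTm ρ σ x := by
  by_cases hx : StabA Tm.var (itnT ρ) x
  · have h1 : ρ.tm x = Tm.var (orbA Tm.var ρ.tm 1 x) :=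
      stabA_orb (f := ρ.tm) (itnT_zero ρ) (itnT_succ ρ) hx 1
    rw [h1]
    show hatTm ρ σ (orbA Tm.var ρ.tm 1 x) = hatTm ρ σ x
    have hx1 : StabA Tm.var (itnT ρ) (orbA Tm.var ρ.tm 1 x) :=
      stabA_of_orb (itnT_zero ρ) (itnT_succ ρ) hx 1
    rw [hatTm_stab hx1, hatTm_stab hx, clsA_orb (itnT_zero ρ) (itnT_succ ρ) hx 1]
  · by_cases hv : ∃ y, ρ.tm x = Tm.var y
    · obtain ⟨y, hy⟩ := hv
      have hyu : ¬StabA Tm.var (itnT ρ) y :=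
        unstabA_shift (itnT_zero ρ) (itnT_shift ρ) hy hx
      rw [hy]
      show hatTm ρ σ y = hatTm ρ σ x
      rw [hatTm_unstab hσ hyu, hatTm_unstab hσ hx,
        tXA_shift Tm.var_injective (itnT_zero ρ) (itnT_shift ρ) hy (not_stabA_iff.1 hyu)]
    · push_neg at hv
      obtain ⟨ht, _⟩ := tXA_base (itnT_zero ρ) (itnT_succ ρ) hv
      rw [hatTm_unstab hσ hx, ht]

theorem hat_comp_dm [Nonempty V] [Nonempty M] (hσ : σ.Unifies ρ) (μ : M) :
    (ρ.dm μ).subst (hatTm ρ σ) (hatDm ρ σ) = hatDm ρ σ μ := by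
  by_cases hμ : StabA DTm.dvar (itnD ρ) μ
  · have h1 : ρ.dm μ = DTm.dvar (orbA DTm.dvar ρ.dm 1 μ) :=
      stabA_orb (f := ρ.dm) (itnD_zero ρ) (itnD_succ ρ) hμ 1
    rw [h1]
    show hatDm ρ σ (orbA DTm.dvar ρ.dm 1 μ) = hatDm ρ σ μ
    have hμ1 : StabA DTm.dvar (itnD ρ) (orbA DTm.dvar ρ.dm 1 μ) :=
      stabA_of_orb (itnD_zero ρ) (itnD_succ ρ) hμ 1
    rw [hatDm_stab hμ1, hatDm_stab hμ, clsA_orb (itnD_zero ρ) (itnD_succ ρ) hμ 1]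
  · by_cases hv : ∃ ν, ρ.dm μ = DTm.dvar ν
    · obtain ⟨ν, hν⟩ := hv
      have hνu : ¬StabA DTm.dvar (itnD ρ) ν :=
        unstabA_shift (itnD_zero ρ) (itnD_shift ρ) hν hμ
      rw [hν]
      show hatDm ρ σ ν = hatDm ρ σ μ
      rw [hatDm_unstab hσ hνu, hatDm_unstab hσ hμ,
        tXA_shift DTm.dvar_injective (itnD_zero ρ) (itnD_shift ρ) hν (not_stabA_iff.1 hνu)]
    · push_neg at hv
      obtain ⟨ht, _⟩ := tXA_base (itnD_zero ρ) (itnD_succ ρ) hv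
      rw [hatDm_unstab hσ hμ, ht]

theorem unif_orb_tm (hτ : τ.Unifies ρ) {x : V} (hx : StabA Tm.var (itnT ρ) x) (n : ℕ) :
    τ.tm (orbA Tm.var ρ.tm n x) = τ.tm x := by
  conv_rhs => rw [← hτ.iter_tm n x]
  rw [show (ρ.iter n).tm x = Tm.var (orbA Tm.var ρ.tm n x) from
    stabA_orb (itnT_zero ρ) (itnT_succ ρ) hx n]
  rfl

theorem unif_orb_dm (hτ : τ.Unifies ρ) {μ : M} (hμ : StabA DTm.dvar (itnD ρ) μ) (n : ℕ) :
    τ.dm (orbA DTm.dvar ρ.dm n μ) = τ.dm μ := by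
  conv_rhs => rw [← hτ.iter_dm n μ]
  rw [show (ρ.iter n).dm μ = DTm.dvar (orbA DTm.dvar ρ.dm n μ) from
    stabA_orb (itnD_zero ρ) (itnD_succ ρ) hμ n]
  rfl

theorem unif_cls_tm (hτ : τ.Unifies ρ) {x z : V} (hx : StabA Tm.var (itnT ρ) x)
    (hz : z ∈ clsA Tm.var ρ.tm (itnT ρ) x) : τ.tm z = τ.tm x := by
  obtain ⟨hzs, n, m, he⟩ := hz
  rw [← unif_orb_tm hτ hzs n, he, unif_orb_tm hτ hx m]

theorem unif_cls_dm (hτ : τ.Unifies ρ) {μ ν : M} (hμ : StabA DTm.dvar (itnD ρ) μ)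
    (hν : ν ∈ clsA DTm.dvar ρ.dm (itnD ρ) μ) : τ.dm ν = τ.dm μ := by
  obtain ⟨hνs, n, m, he⟩ := hν
  rw [← unif_orb_dm hτ hνs n, he, unif_orb_dm hτ hμ m]

theorem hat_unif_tm [Nonempty V] (hσ : σ.Unifies ρ) (hτ : τ.Unifies ρ) :
    ∀ x, (hatTm ρ σ x).bind τ.tm = τ.tm x := by
  suffices H : ∀ k x, (σ.tm x).sz < k → (hatTm ρ σ x).bind τ.tm = τ.tm x from
    fun x => H ((σ.tm x).sz + 1) x (Nat.lt_succ_self _)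
  intro k
  induction k with
  | zero => intro x hx; omega
  | succ k ih =>
    intro x hxk
    by_cases hx : StabA Tm.var (itnT ρ) x
    · rw [hatTm_stab hx]
      show τ.tm (repA Tm.var ρ.tm (clsA Tm.var ρ.tm (itnT ρ) x)) = τ.tm x
      exact unif_cls_tm hτ hx (repA_mem ⟨x, mem_clsA_self hx⟩)
    · obtain ⟨hne, heq, hlt⟩ := hat_measT hσ hx
      rw [hatTm_unstab hσ hx, Tm.bind_assoc,
        Tm.bind_congr fun y hy => ih y (by have := hlt y hy; omega),
        ← tXA_spec (f := ρ.tm) (itnT_zero ρ) (itnT_succ ρ) (not_stabA_iff.1 hx)]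
      exact hτ.iter_tm _ x

theorem hat_unif_dm [Nonempty V] [Nonempty M] (hσ : σ.Unifies ρ) (hτ : τ.Unifies ρ) :
    ∀ μ, (hatDm ρ σ μ).subst τ.tm τ.dm = τ.dm μ := by
  suffices H : ∀ o : Ordinal.{0}, ∀ μ, (σ.dm μ).dsz ≤ o →
      (hatDm ρ σ μ).subst τ.tm τ.dm = τ.dm μ from fun μ => H _ μ le_rfl
  intro o
  induction o using Ordinal.induction with
  | h o ih =>
    intro μ hμo
    by_cases hμ : StabA DTm.dvar (itnD ρ) μ
    · rw [hatDm_stab hμ]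
      show τ.dm (repA DTm.dvar ρ.dm (clsA DTm.dvar ρ.dm (itnD ρ) μ)) = τ.dm μ
      exact unif_cls_dm hτ hμ (repA_mem ⟨μ, mem_clsA_self hμ⟩)
    · obtain ⟨hne, heq, hlt⟩ := hat_measD hσ hμ
      rw [hatDm_unstab hσ hμ, DTm.subst_assoc,
        DTm.subst_congr (a' := τ.tm) (b' := fun ν => (hatDm ρ σ ν).subst τ.tm τ.dm)
          (fun y _ => hat_unif_tm hσ hτ y) (fun ν _ => rfl),
        DTm.subst_congr (a' := τ.tm) (b' := τ.dm) (fun y _ => rfl)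
          (fun ν hν => ih _ (lt_of_lt_of_le (hlt ν hν) hμo) ν le_rfl),
        ← tXA_spec (f := ρ.dm) (itnD_zero ρ) (itnD_succ ρ) (not_stabA_iff.1 hμ)]
      exact hτ.iter_dm _ μ

theorem hat_fix_tm [Nonempty V] {x : V} (hfx : ρ.tm x = Tm.var x) :
    hatTm ρ σ x = Tm.var x := by
  have hx : StabA Tm.var (itnT ρ) x := stabA_fix (itnT_zero ρ) (itnT_succ ρ) hfx
  rw [hatTm_stab hx]
  congr 1
  exact repA_fix (mem_clsA_self hx) hfx (clsA_fix_unique Tm.var_injective hfx)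

theorem hat_fix_dm [Nonempty V] [Nonempty M] {μ : M} (hfμ : ρ.dm μ = DTm.dvar μ) :
    hatDm ρ σ μ = DTm.dvar μ := by
  have hμ : StabA DTm.dvar (itnD ρ) μ := stabA_fix (itnD_zero ρ) (itnD_succ ρ) hfμ
  rw [hatDm_stab hμ]
  congr 1
  exact repA_fix (mem_clsA_self hμ) hfμ (clsA_fix_unique DTm.dvar_injective hfμ)

end Hat

/-- Lemma 5.2: every unifiable substitution has a most general
unifier, which moreover fixes the variables fixed by `ρ` and maps to variables the
variables that stay variables under all iterations of `ρ`. -/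
theorem exists_most_general_unifier
    (s : Sig) (M V : Type) [Infinite V] [Infinite M]
    (ρ : Subst s M V) (h : ∃ σ : Subst s M V, σ.Unifies ρ) :
    ∃ σh : Subst s M V, σh.Unifies ρ ∧
      (∀ σ : Subst s M V, σ.Unifies ρ → σ.Unifies σh) ∧
      (∀ x : V, ρ.tm x = Tm.var x → σh.tm x = Tm.var x) ∧
      (∀ μ : M, ρ.dm μ = DTm.dvar μ → σh.dm μ = DTm.dvar μ) ∧
      (∀ x : V, (∀ n : ℕ, ∃ y, (ρ.iter n).tm x = Tm.var y) →
        ∃ y, σh.tm x = Tm.var y) ∧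
      (∀ μ : M, (∀ n : ℕ, ∃ ν, (ρ.iter n).dm μ = DTm.dvar ν) →
        ∃ ν, σh.dm μ = DTm.dvar ν) := by
  obtain ⟨σ, hσ⟩ := h
  refine ⟨⟨hatTm ρ σ, hatDm ρ σ⟩, ?_, ?_, ?_, ?_, ?_, ?_⟩
  · exact Subst.ext' (funext fun x => hat_comp_tm hσ x) (funext fun μ => hat_comp_dm hσ μ)
  · intro τ hτ
    exact Subst.ext' (funext (hat_unif_tm hσ hτ)) (funext (hat_unif_dm hσ hτ))
  · intro x hx
    exact hat_fix_tm hx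
  · intro μ hμ
    exact hat_fix_dm hμ
  · intro x hx
    exact ⟨_, hatTm_stab (σ := σ) hx⟩
  · intro μ hμ
    exact ⟨_, hatDm_stab (σ := σ) hμ⟩

end PTSSpec
end
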